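/- Let p be an odd prime, L = ⟨−1,2⟩ ≤ (Z/pZ)^× of index 3, and g a primitive root mod p. Then the cyclotomic number A(1,2) = |(1 + gL) ∩ g²L| is positive; in fact A(1,2) = A(0,0) + 1 where A(0,0) = |(1 + L) ∩ L|. -/

import Mathlib

/-!
Write `T i = 1 + g^i L` and `n = |L|`. Since `L` has index 3, the cosets `g^0 L, g^1 L, g^2 L`
partition the nonzero residues, so `|T i| = n` is `[0 ∈ T i] + A(i,0) + A(i,1) + A(i,2)`.
As `-1 ∈ L`, we have `0 ∈ T 0` but `0 ∉ T 1`, which gives the two row sums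
`1 + A(0,0) + A(0,1) + A(0,2) = n = A(1,0) + A(1,1) + A(1,2)`.
The involution `z ↦ 1 - z` gives `A(i,j) = A(j,i)`, and `z ↦ z/(z-1) = 1 + (z-1)⁻¹` gives
`A(i,j) = A(-i, j-i)`, so `A(1,1) = A(2,0) = A(0,2)`; subtracting the rows leaves
`A(1,2) = A(0,0) + 1`.
-/

/-- The coset `g^i H` viewed as a subset of `ZMod p`. -/
def coset (p : ℕ) (g : (ZMod p)ˣ) (H : Subgroup (ZMod p)ˣ) (i : ℤ) : Set (ZMod p) :=
  (fun h : (ZMod p)ˣ => ((g ^ i * h : (ZMod p)ˣ) : ZMod p)) '' (H : Set (ZMod p)ˣ)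

/-- The cyclotomic number `A(i,j) = |(1 + g^i H) ∩ g^j H|`. -/
noncomputable def cyc (p : ℕ) (g : (ZMod p)ˣ) (H : Subgroup (ZMod p)ˣ) (i j : ℤ) : ℕ :=
  (((fun x => 1 + x) '' coset p g H i) ∩ coset p g H j).ncard

theorem zpow_mem_iff_index_dvd {G : Type*} [CommGroup G] {g : G}
    (hg : ∀ x, x ∈ Subgroup.zpowers g) (L : Subgroup G) (k : ℤ) :
    g ^ k ∈ L ↔ (L.index : ℤ) ∣ k := by
  have hq : ∀ y : G ⧸ L, y ∈ Subgroup.zpowers (g : G ⧸ L) := by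
    intro y
    obtain ⟨x, rfl⟩ := QuotientGroup.mk_surjective y
    obtain ⟨m, rfl⟩ := Subgroup.mem_zpowers_iff.mp (hg x)
    exact ⟨m, rfl⟩
  rw [← QuotientGroup.eq_one_iff, QuotientGroup.mk_zpow, ← orderOf_dvd_iff_zpow_eq_one,
    orderOf_eq_card_of_forall_mem_zpowers hq, Subgroup.index_eq_card]

section Coset

variable {p : ℕ} {g : (ZMod p)ˣ} {L : Subgroup (ZMod p)ˣ} {i j : ℤ} {z w : ZMod p}

lemma coset_eq_image_preimage :
    coset p g L i = Units.val '' ((g ^ (-i) * ·) ⁻¹' L) := by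
  rw [coset, ← Set.image_image Units.val (g ^ i * ·), Set.image_mul_left, zpow_neg]

lemma coe_mem_coset_iff {x : (ZMod p)ˣ} :
    (x : ZMod p) ∈ coset p g L i ↔ g ^ (-i) * x ∈ L := by
  rw [coset_eq_image_preimage, Units.val_injective.mem_set_image]
  rfl

lemma exists_unit_of_mem_coset (hz : z ∈ coset p g L i) :
    ∃ x : (ZMod p)ˣ, g ^ (-i) * x ∈ L ∧ (x : ZMod p) = z := by
  rwa [coset_eq_image_preimage] at hz

lemma ne_zero_of_mem_coset [Nontrivial (ZMod p)] (hz : z ∈ coset p g L i) : z ≠ 0 := by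
  obtain ⟨x, -, rfl⟩ := exists_unit_of_mem_coset hz
  exact x.ne_zero

lemma exists_mem_coset [Fact p.Prime] (hg : ∀ x : (ZMod p)ˣ, x ∈ Subgroup.zpowers g)
    (hz : z ≠ 0) :
    ∃ k : ℤ, z ∈ coset p g L k := by
  obtain ⟨k, hk⟩ := Subgroup.mem_zpowers_iff.mp (hg (Units.mk0 z hz))
  refine ⟨k, ?_⟩
  rw [← Units.val_mk0 hz, ← hk, coe_mem_coset_iff, ← zpow_add, neg_add_cancel, zpow_zero]
  exact L.one_mem

lemma coset_eq_of_zpow_sub_mem (h : g ^ (i - j) ∈ L) : coset p g L i = coset p g L j := by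
  rw [coset_eq_image_preimage, coset_eq_image_preimage]
  congr 1
  ext x
  simp only [Set.mem_preimage, SetLike.mem_coe]
  rw [← L.mul_mem_cancel_left h, ← mul_assoc, ← zpow_add, show i - j + -i = -j by ring]

lemma zpow_sub_mem_of_mem_coset (hi : z ∈ coset p g L i) (hj : z ∈ coset p g L j) :
    g ^ (i - j) ∈ L := by
  obtain ⟨x, hx, rfl⟩ := exists_unit_of_mem_coset hi
  rw [coe_mem_coset_iff] at hj
  rwa [← L.mul_mem_cancel_right hx, ← mul_assoc, ← zpow_add, show i - j + -i = -j by ring]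

lemma disjoint_coset (h : g ^ (i - j) ∉ L) : Disjoint (coset p g L i) (coset p g L j) :=
  Set.disjoint_left.2 fun _ hi hj => h (zpow_sub_mem_of_mem_coset hi hj)

lemma neg_mem_coset (hneg : (-1 : (ZMod p)ˣ) ∈ L) (hz : z ∈ coset p g L i) :
    -z ∈ coset p g L i := by
  obtain ⟨x, hx, rfl⟩ := exists_unit_of_mem_coset hz
  rwa [← Units.val_neg, coe_mem_coset_iff, mul_neg, neg_eq_neg_one_mul,
    L.mul_mem_cancel_left hneg]

lemma mul_mem_coset (hz : z ∈ coset p g L i) (hw : w ∈ coset p g L j) :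
    z * w ∈ coset p g L (i + j) := by
  obtain ⟨x, hx, rfl⟩ := exists_unit_of_mem_coset hz
  obtain ⟨y, hy, rfl⟩ := exists_unit_of_mem_coset hw
  rw [← Units.val_mul, coe_mem_coset_iff, neg_add, zpow_add, mul_mul_mul_comm]
  exact L.mul_mem hx hy

lemma inv_mem_coset [Fact p.Prime] (hz : z ∈ coset p g L i) : z⁻¹ ∈ coset p g L (-i) := by
  obtain ⟨x, hx, rfl⟩ := exists_unit_of_mem_coset hz
  rw [← Units.val_inv_eq_inv_val, coe_mem_coset_iff, neg_neg]
  simpa only [mul_inv, zpow_neg, inv_inv] using L.inv_mem hx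

lemma neg_one_mem_coset_zero (hneg : (-1 : (ZMod p)ˣ) ∈ L) :
    (-1 : ZMod p) ∈ coset p g L 0 := by
  rw [← Units.val_one, ← Units.val_neg, coe_mem_coset_iff, neg_zero, zpow_zero, one_mul]
  exact hneg

end Coset

section Cyc

variable {p : ℕ} {g : (ZMod p)ˣ} {L : Subgroup (ZMod p)ˣ}

lemma mem_image_one_add_coset {i : ℤ} {z : ZMod p} :
    z ∈ (fun x => 1 + x) '' coset p g L i ↔ z - 1 ∈ coset p g L i := by
  rw [Set.image_add_left, Set.mem_preimage, neg_add_eq_sub]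

lemma ncard_image_one_add_coset (i : ℤ) :
    ((fun x => 1 + x) '' coset p g L i).ncard = (L : Set (ZMod p)ˣ).ncard := by
  rw [Set.ncard_image_of_injective _ (add_right_injective 1), coset]
  exact Set.ncard_image_of_injective _ (Units.val_injective.comp (mul_right_injective _))

lemma cyc_congr {i i' j j' : ℤ} (hi : g ^ (i - i') ∈ L) (hj : g ^ (j - j') ∈ L) :
    cyc p g L i j = cyc p g L i' j' := by
  rw [cyc, cyc, coset_eq_of_zpow_sub_mem hi, coset_eq_of_zpow_sub_mem hj]

lemma cyc_le_of_injective [NeZero p] {i j i' j' : ℤ} {f : ZMod p → ZMod p}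
    (hf : Function.Injective f)
    (hmaps : ∀ z, z - 1 ∈ coset p g L i → z ∈ coset p g L j →
      f z - 1 ∈ coset p g L i' ∧ f z ∈ coset p g L j') :
    cyc p g L i j ≤ cyc p g L i' j' := by
  refine Set.ncard_le_ncard_of_injOn f (fun z hz => ?_) hf.injOn
  rw [Set.mem_inter_iff, mem_image_one_add_coset] at hz ⊢
  exact hmaps z hz.1 hz.2

lemma cyc_comm [NeZero p] (hneg : (-1 : (ZMod p)ˣ) ∈ L) (i j : ℤ) :
    cyc p g L i j = cyc p g L j i := by
  have key : ∀ i j : ℤ, cyc p g L i j ≤ cyc p g L j i := fun i j =>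
    cyc_le_of_injective (f := fun z => 1 - z) sub_right_injective fun z hi hj =>
      ⟨by simpa only [sub_sub_cancel_left] using neg_mem_coset hneg hj,
        by simpa only [neg_sub] using neg_mem_coset hneg hi⟩
  exact le_antisymm (key i j) (key j i)

lemma cyc_eq_cyc_neg_sub [Fact p.Prime] (i j : ℤ) :
    cyc p g L i j = cyc p g L (-i) (j - i) := by
  have key : ∀ i j : ℤ, cyc p g L i j ≤ cyc p g L (-i) (j - i) := fun i j =>
    cyc_le_of_injective (f := fun z => 1 + (z - 1)⁻¹)
      ((add_right_injective 1).comp (inv_injective.comp sub_left_injective)) fun z hi hj => by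
        have hz1 : z - 1 ≠ 0 := ne_zero_of_mem_coset hi
        refine ⟨by simpa only [add_sub_cancel_left] using inv_mem_coset hi, ?_⟩
        have hfz : 1 + (z - 1)⁻¹ = z * (z - 1)⁻¹ := by field_simp; ring
        rw [hfz, sub_eq_add_neg]
        exact mul_mem_coset hj (inv_mem_coset hi)
  refine le_antisymm (key i j) ?_
  simpa only [neg_neg, sub_neg_eq_add, sub_add_cancel] using key (-i) (j - i)

variable [Fact p.Prime] (hg : ∀ x : (ZMod p)ˣ, x ∈ Subgroup.zpowers g)
  (h3 : ∀ k : ℤ, g ^ k ∈ L ↔ 3 ∣ k)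
include hg h3

lemma ncard_eq_inter_zero_add_inter_coset (S : Set (ZMod p)) :
    S.ncard = (S ∩ {0}).ncard + (S ∩ coset p g L 0).ncard + (S ∩ coset p g L 1).ncard +
      (S ∩ coset p g L 2).ncard := by
  have hcover :
      S = S ∩ {0} ∪ S ∩ coset p g L 0 ∪ S ∩ coset p g L 1 ∪ S ∩ coset p g L 2 := by
    refine Set.Subset.antisymm (fun z hz => ?_) (by simp only [Set.union_subset_iff,
      Set.inter_subset_left, and_self])
    by_cases h0 : z = 0
    · subst h0
      simp [hz]
    obtain ⟨k, hk⟩ := exists_mem_coset hg h0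
    rw [coset_eq_of_zpow_sub_mem ((h3 (k - k % 3)).2 (by omega))] at hk
    have : k % 3 = 0 ∨ k % 3 = 1 ∨ k % 3 = 2 := by omega
    rcases this with h | h | h <;> rw [h] at hk <;> simp [hz, hk]
  have hdisj : ∀ i j : ℤ, ¬ (3 : ℤ) ∣ i - j →
      Disjoint (S ∩ coset p g L i) (S ∩ coset p g L j) := fun i j h =>
    (disjoint_coset (mt (h3 _).1 h)).mono Set.inter_subset_right Set.inter_subset_right
  have hzero : ∀ i : ℤ, Disjoint (S ∩ {0}) (S ∩ coset p g L i) := fun i =>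
    (Set.disjoint_singleton_left.2 fun h => ne_zero_of_mem_coset h rfl).mono
      Set.inter_subset_right Set.inter_subset_right
  conv_lhs => rw [hcover]
  rw [Set.ncard_union_eq (Set.disjoint_union_left.2 ⟨Set.disjoint_union_left.2
      ⟨hzero 2, hdisj 0 2 (by omega)⟩, hdisj 1 2 (by omega)⟩),
    Set.ncard_union_eq (Set.disjoint_union_left.2 ⟨hzero 1, hdisj 0 1 (by omega)⟩),
    Set.ncard_union_eq (hzero 0)]

lemma ncard_inter_zero_add_cyc (i : ℤ) :
    ((fun x => 1 + x) '' coset p g L i ∩ {0}).ncard + cyc p g L i 0 + cyc p g L i 1 +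
      cyc p g L i 2 = (L : Set (ZMod p)ˣ).ncard := by
  rw [← ncard_image_one_add_coset (g := g) i,
    ncard_eq_inter_zero_add_inter_coset hg h3 ((fun x => 1 + x) '' coset p g L i)]
  rfl

variable (hneg : (-1 : (ZMod p)ˣ) ∈ L)
include hneg

lemma one_add_cyc_zero_row :
    1 + cyc p g L 0 0 + cyc p g L 0 1 + cyc p g L 0 2 = (L : Set (ZMod p)ˣ).ncard := by
  have h0 : (0 : ZMod p) ∈ (fun x => 1 + x) '' coset p g L 0 := by
    rw [mem_image_one_add_coset, zero_sub]
    exact neg_one_mem_coset_zero hneg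
  rw [← ncard_inter_zero_add_cyc hg h3, Set.inter_singleton_of_mem h0, Set.ncard_singleton]

lemma cyc_one_row :
    cyc p g L 1 0 + cyc p g L 1 1 + cyc p g L 1 2 = (L : Set (ZMod p)ˣ).ncard := by
  have h0 : (0 : ZMod p) ∉ (fun x => 1 + x) '' coset p g L 1 := by
    rw [mem_image_one_add_coset, zero_sub]
    refine Set.disjoint_left.1 (disjoint_coset ?_) (neg_one_mem_coset_zero hneg)
    rw [h3]
    omega
  rw [← ncard_inter_zero_add_cyc hg h3 1, Set.inter_singleton_of_notMem h0, Set.ncard_empty,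
    zero_add]

end Cyc

theorem stmt_15_general (p : ℕ) [Fact p.Prime]
    (u : (ZMod p)ˣ)
    (L : Subgroup (ZMod p)ˣ) (hL : L = Subgroup.closure {-1, u})
    (hℓ : L.index = 3)
    (g : (ZMod p)ˣ) (hg : ∀ x : (ZMod p)ˣ, x ∈ Subgroup.zpowers g) :
    0 < cyc p g L 1 2 ∧ cyc p g L 1 2 = cyc p g L 0 0 + 1 := by
  have hneg : (-1 : (ZMod p)ˣ) ∈ L := hL ▸ Subgroup.subset_closure (Set.mem_insert _ _)
  have h3 : ∀ k : ℤ, g ^ k ∈ L ↔ 3 ∣ k := by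
    simpa only [hℓ, Nat.cast_ofNat] using zpow_mem_iff_index_dvd hg L
  have row0 := one_add_cyc_zero_row hg h3 hneg
  have row1 := cyc_one_row hg h3 hneg
  have h10 := cyc_comm (g := g) hneg 1 0
  have h20 := cyc_comm (g := g) hneg 2 0
  have h11 : cyc p g L 1 1 = cyc p g L 2 0 :=
    (cyc_eq_cyc_neg_sub 1 1).trans (cyc_congr ((h3 _).2 (by norm_num)) ((h3 _).2 (by norm_num)))
  omega

theorem stmt_15 (p : ℕ) [Fact p.Prime] (hodd : Odd p)
    (u : (ZMod p)ˣ) (hu : (u : ZMod p) = 2)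
    (L : Subgroup (ZMod p)ˣ) (hL : L = Subgroup.closure {-1, u})
    (hℓ : L.index = 3)
    (g : (ZMod p)ˣ) (hg : ∀ x : (ZMod p)ˣ, x ∈ Subgroup.zpowers g) :
    0 < cyc p g L 1 2 ∧ cyc p g L 1 2 = cyc p g L 0 0 + 1 :=
  stmt_15_general p u L hL hℓ g hg
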